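/- arXiv:2208.05673 — 2 statements merged into one kernel-verified Lean document; each statement's English description precedes it below -/
import Mathlib

section
/- For k, k' ∈ 𝕊¹ and λ > 0, with b_k(ξ) = i k^⊥ e^{ik·ξ}, the identity div( b_{k'}(λx) ⊗ b_k(λx) + b_k(λx) ⊗ b_{k'}(λx) ) = ∇( b_k(λx) · b_{k'}(λx) + e^{i(k+k')·λx} ) holds. -/
/-- Derivative of `s ↦ C e^{as+c}` along ℝ. -/
lemma derivCE (C a c : ℂ) (t : ℝ) :
    deriv (fun s : ℝ => C * Complex.exp (a * s + c)) t = C * a * Complex.exp (a * t + c) := by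
  have h1 : HasDerivAt (fun s : ℝ => a * s + c) a t := by
    simpa using ((Complex.ofRealCLM.hasDerivAt (x := t)).const_mul a).add_const c
  simpa [mul_comm, mul_assoc, mul_left_comm] using (h1.cexp.const_mul C).deriv

/-- `pC i` is the `i`-th partial derivative of a complex-valued function on ℝ². -/
noncomputable def pC : Fin 2 → (ℝ × ℝ → ℂ) → ℝ × ℝ → ℂ :=
  ![fun f z => deriv (fun s => f (s, z.2)) z.1, fun f z => deriv (fun s => f (z.1, s)) z.2]

/-- `k^⊥ = (−k₂, k₁)`, as a complex 2-vector. -/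
noncomputable def perpC (k : ℝ × ℝ) : Fin 2 → ℂ := ![-(k.2 : ℂ), (k.1 : ℂ)]

/-- `b_k(ξ) = i k^⊥ e^{i k·ξ}`. -/
noncomputable def bk (k : ℝ × ℝ) (j : Fin 2) (ξ : ℝ × ℝ) : ℂ :=
  Complex.I * perpC k j * Complex.exp (Complex.I * (k.1 * ξ.1 + k.2 * ξ.2))

lemma pC_exp (C : ℂ) (a b : ℝ) (z : ℝ × ℝ) (i : Fin 2) :
    pC i (fun w => C * Complex.exp (Complex.I * ((a : ℂ) * w.1 + (b : ℂ) * w.2))) z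
      = C * (Complex.I * (![a, b] i : ℝ)) *
        Complex.exp (Complex.I * ((a : ℂ) * z.1 + (b : ℂ) * z.2)) := by
  fin_cases i
  · show deriv (fun s : ℝ => C * Complex.exp (Complex.I * ((a : ℂ) * s + (b : ℂ) * z.2))) z.1
      = C * (Complex.I * (a : ℝ)) * Complex.exp (Complex.I * ((a : ℂ) * z.1 + (b : ℂ) * z.2))
    have h : (fun s : ℝ => C * Complex.exp (Complex.I * ((a : ℂ) * s + (b : ℂ) * z.2)))
        = fun s : ℝ => C * Complex.exp ((Complex.I * a) * s + Complex.I * b * z.2) := by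
      funext s; ring_nf
    rw [h, derivCE]
    congr 2
    ring
  · show deriv (fun s : ℝ => C * Complex.exp (Complex.I * ((a : ℂ) * z.1 + (b : ℂ) * s))) z.2
      = C * (Complex.I * (b : ℝ)) * Complex.exp (Complex.I * ((a : ℂ) * z.1 + (b : ℂ) * z.2))
    have h : (fun s : ℝ => C * Complex.exp (Complex.I * ((a : ℂ) * z.1 + (b : ℂ) * s)))
        = fun s : ℝ => C * Complex.exp ((Complex.I * b) * s + Complex.I * a * z.1) := by
      funext s; ring_nf
    rw [h, derivCE]
    congr 2
    ring

lemma bk_mul (k k' : ℝ × ℝ) (i j : Fin 2) (ξ : ℝ × ℝ) :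
    bk k' i ξ * bk k j ξ = -(perpC k' i * perpC k j) *
      Complex.exp (Complex.I * (((k.1 : ℂ) + k'.1) * ξ.1 + ((k.2 : ℂ) + k'.2) * ξ.2)) := by
  simp only [bk]
  rw [show Complex.I * perpC k' i * Complex.exp (Complex.I * (↑k'.1 * ↑ξ.1 + ↑k'.2 * ↑ξ.2)) *
      (Complex.I * perpC k j * Complex.exp (Complex.I * (↑k.1 * ↑ξ.1 + ↑k.2 * ↑ξ.2)))
      = (Complex.I * Complex.I) * (perpC k' i * perpC k j) *
        (Complex.exp (Complex.I * (↑k'.1 * ↑ξ.1 + ↑k'.2 * ↑ξ.2)) *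
         Complex.exp (Complex.I * (↑k.1 * ↑ξ.1 + ↑k.2 * ↑ξ.2))) from by ring,
    Complex.I_mul_I, ← Complex.exp_add]
  congr 2 <;> ring

/-- For `k, k' ∈ 𝕊¹` and `λ > 0`:
`div( b_{k'}(λx) ⊗ b_k(λx) + b_k(λx) ⊗ b_{k'}(λx) ) = ∇( b_k(λx)·b_{k'}(λx) + e^{i(k+k')·λx} )`,
stated componentwise (`i`-th component of the divergence of the matrix against its second
index equals the `i`-th partial derivative of the scalar on the right). -/
theorem stmt10 (k k' : ℝ × ℝ) (hk : k.1 ^ 2 + k.2 ^ 2 = 1) (hk' : k'.1 ^ 2 + k'.2 ^ 2 = 1)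
    (lam : ℝ) (hlam : 0 < lam) (z : ℝ × ℝ) (i : Fin 2) :
    pC 0 (fun w => bk k' i (lam * w.1, lam * w.2) * bk k 0 (lam * w.1, lam * w.2)
        + bk k i (lam * w.1, lam * w.2) * bk k' 0 (lam * w.1, lam * w.2)) z
      + pC 1 (fun w => bk k' i (lam * w.1, lam * w.2) * bk k 1 (lam * w.1, lam * w.2)
        + bk k i (lam * w.1, lam * w.2) * bk k' 1 (lam * w.1, lam * w.2)) z
      = pC i (fun w =>
          (∑ j : Fin 2, bk k j (lam * w.1, lam * w.2) * bk k' j (lam * w.1, lam * w.2))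
          + Complex.exp (Complex.I * (((k.1 + k'.1) * (lam * w.1))
              + ((k.2 + k'.2) * (lam * w.2))))) z := by
  have hL : ∀ j : Fin 2,
      (fun w : ℝ × ℝ => bk k' i (lam * w.1, lam * w.2) * bk k j (lam * w.1, lam * w.2)
        + bk k i (lam * w.1, lam * w.2) * bk k' j (lam * w.1, lam * w.2))
      = fun w : ℝ × ℝ => (-(perpC k' i * perpC k j) + -(perpC k i * perpC k' j)) *
          Complex.exp (Complex.I * ((((k.1 + k'.1) * lam : ℝ) : ℂ) * w.1
            + (((k.2 + k'.2) * lam : ℝ) : ℂ) * w.2)) := by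
    intro j
    funext w
    rw [bk_mul k k' i j, bk_mul k' k i j]
    rw [show Complex.I * (((k.1 : ℂ) + k'.1) * ((lam * w.1 : ℝ) : ℂ)
          + ((k.2 : ℂ) + k'.2) * ((lam * w.2 : ℝ) : ℂ))
        = Complex.I * ((((k.1 + k'.1) * lam : ℝ) : ℂ) * w.1
            + (((k.2 + k'.2) * lam : ℝ) : ℂ) * w.2) from by push_cast; ring,
      show Complex.I * (((k'.1 : ℂ) + k.1) * ((lam * w.1 : ℝ) : ℂ)
          + ((k'.2 : ℂ) + k.2) * ((lam * w.2 : ℝ) : ℂ))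
        = Complex.I * ((((k.1 + k'.1) * lam : ℝ) : ℂ) * w.1
            + (((k.2 + k'.2) * lam : ℝ) : ℂ) * w.2) from by push_cast; ring]
    ring
  have hR : (fun w : ℝ × ℝ =>
        (∑ j : Fin 2, bk k j (lam * w.1, lam * w.2) * bk k' j (lam * w.1, lam * w.2))
        + Complex.exp (Complex.I * (((k.1 + k'.1) * (lam * w.1))
            + ((k.2 + k'.2) * (lam * w.2)))))
      = fun w : ℝ × ℝ => ((-(perpC k 0 * perpC k' 0) + -(perpC k 1 * perpC k' 1)) + 1) *
          Complex.exp (Complex.I * ((((k.1 + k'.1) * lam : ℝ) : ℂ) * w.1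
            + (((k.2 + k'.2) * lam : ℝ) : ℂ) * w.2)) := by
    funext w
    rw [Fin.sum_univ_two, bk_mul k' k 0 0, bk_mul k' k 1 1]
    rw [show Complex.I * (((k'.1 : ℂ) + k.1) * ((lam * w.1 : ℝ) : ℂ)
          + ((k'.2 : ℂ) + k.2) * ((lam * w.2 : ℝ) : ℂ))
        = Complex.I * ((((k.1 + k'.1) * lam : ℝ) : ℂ) * w.1
            + (((k.2 + k'.2) * lam : ℝ) : ℂ) * w.2) from by push_cast; ring,
      show Complex.I * (((k.1 : ℂ) + (k'.1 : ℂ)) * ((lam : ℂ) * (w.1 : ℂ))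
          + ((k.2 : ℂ) + (k'.2 : ℂ)) * ((lam : ℂ) * (w.2 : ℂ)))
        = Complex.I * ((((k.1 + k'.1) * lam : ℝ) : ℂ) * w.1
            + (((k.2 + k'.2) * lam : ℝ) : ℂ) * w.2) from by push_cast; ring]
    ring
  rw [hL 0, hL 1, hR, pC_exp, pC_exp, pC_exp]
  have hkC : (k.1 : ℂ) ^ 2 + (k.2 : ℂ) ^ 2 = 1 := by exact_mod_cast hk
  have hk'C : (k'.1 : ℂ) ^ 2 + (k'.2 : ℂ) ^ 2 = 1 := by exact_mod_cast hk'
  fin_cases i <;>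
    simp only [Fin.zero_eta, Fin.mk_one, Fin.isValue, perpC, Matrix.cons_val_zero,
      Matrix.cons_val_one, Matrix.head_cons] <;>
    push_cast
  · linear_combination (Complex.I * lam *
        Complex.exp (Complex.I * (((k.1 : ℂ) + k'.1) * lam * z.1 + ((k.2 : ℂ) + k'.2) * lam * z.2))
        * k.1) * hk'C +
      (Complex.I * lam *
        Complex.exp (Complex.I * (((k.1 : ℂ) + k'.1) * lam * z.1 + ((k.2 : ℂ) + k'.2) * lam * z.2))
        * k'.1) * hkC
  · linear_combination (Complex.I * lam *
        Complex.exp (Complex.I * (((k.1 : ℂ) + k'.1) * lam * z.1 + ((k.2 : ℂ) + k'.2) * lam * z.2))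
        * k.2) * hk'C +
      (Complex.I * lam *
        Complex.exp (Complex.I * (((k.1 : ℂ) + k'.1) * lam * z.1 + ((k.2 : ℂ) + k'.2) * lam * z.2))
        * k'.2) * hkC
end

section
/- For ξ, η ∈ ℝ² with ξ, η, ξ−η all nonzero and γ₂ ∈ (0,2), the algebraic identity i(ξ−η)_l/|ξ−η|^{γ₂} + iη_l/|η|^{γ₂} = iξ_l/|ξ−η|^{γ₂} + Σ_{m=1}^{2} iξ_m · (iη_l/|η|^{γ₂}) · (1/|ξ−η|^{γ₂}) · γ₂ s^m(ξ−η, η) holds, where s^m(λ,η) := ∫₀¹ i((1−r)η − rλ)_m / |(1−r)η − rλ|^{2−γ₂} dr (assuming (1−r)η − rλ ≠ 0 for all r ∈ [0,1]). -/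
/-- The components of a vector in ℝ². -/
def comp2 (v : ℝ × ℝ) : Fin 2 → ℝ := ![v.1, v.2]

/-- The Euclidean norm `|v|` on ℝ². -/
noncomputable def norv (v : ℝ × ℝ) : ℝ := Real.sqrt (v.1 ^ 2 + v.2 ^ 2)

/-- `s^m(λ,η) = ∫₀¹ i((1−r)η − rλ)_m / |(1−r)η − rλ|^{2−γ₂} dr`. -/
noncomputable def sm (γ₂ : ℝ) (m : Fin 2) (lam η : ℝ × ℝ) : ℂ :=
  ∫ r in (0:ℝ)..1,
    Complex.I * (comp2 ((1 - r) • η - r • lam) m : ℂ)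
      / (Real.rpow (norv ((1 - r) • η - r • lam)) (2 - γ₂) : ℂ)

/-! Along `v r = (1 - r) • η - r • (ξ - η) = η - r • ξ` the fundamental theorem of calculus for
`r ↦ |v r| ^ γ₂`, whose derivative is `-γ₂ |v r| ^ (γ₂ - 2) ⟪v r, ξ⟫`, gives
`∑ m, i ξ_m γ₂ s^m(ξ - η, η) = |ξ - η| ^ γ₂ - |η| ^ γ₂` (the two factors `i` cancel the sign).
The sum in the identity is therefore `i η_l (1 / |η| ^ γ₂ - 1 / |ξ - η| ^ γ₂)`, and what remains is
`ξ_l = (ξ - η)_l + η_l`. -/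

open scoped RealInnerProductSpace
open Set

section NormRpow

variable {F : Type*} [NormedAddCommGroup F] [InnerProductSpace ℝ F]

theorem HasDerivAt.norm_rpow {f : ℝ → F} {f' : F} {x : ℝ} (hf : HasDerivAt f f' x)
    (hx : f x ≠ 0) (γ : ℝ) :
    HasDerivAt (fun r => ‖f r‖ ^ γ) (γ * ‖f x‖ ^ (γ - 2) * ⟪f x, f'⟫) x := by
  have hsq : ∀ r, (‖f r‖ ^ 2) ^ (γ / 2) = ‖f r‖ ^ γ := fun r => by
    rw [← Real.rpow_natCast_mul (norm_nonneg _)]; norm_num [mul_div_cancel₀]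
  have h := hf.norm_sq.rpow_const (p := γ / 2) (Or.inl (by positivity))
  convert h using 1
  · simp only [hsq]
  · rw [← Real.rpow_natCast_mul (norm_nonneg _)]; ring_nf

theorem continuousOn_norm_add_smul_rpow (x y : F) (p : ℝ)
    (hseg : ∀ r ∈ Icc (0 : ℝ) 1, x + r • y ≠ 0) :
    ContinuousOn (fun r : ℝ => ‖x + r • y‖ ^ p) (Icc 0 1) :=
  ContinuousOn.rpow_const (by fun_prop) fun r hr => Or.inl (norm_ne_zero_iff.mpr (hseg r hr))

theorem norm_add_rpow_sub_norm_rpow_eq_integral (x y : F) (γ : ℝ)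
    (hseg : ∀ r ∈ Icc (0 : ℝ) 1, x + r • y ≠ 0) :
    ‖x + y‖ ^ γ - ‖x‖ ^ γ = γ * ∫ r in (0 : ℝ)..1, ⟪x + r • y, y⟫ * ‖x + r • y‖ ^ (γ - 2) := by
  have hderiv : ∀ r ∈ uIcc (0 : ℝ) 1, HasDerivAt (fun r => ‖x + r • y‖ ^ γ)
      (γ * (⟪x + r • y, y⟫ * ‖x + r • y‖ ^ (γ - 2))) r := by
    intro r hr
    rw [uIcc_of_le zero_le_one] at hr
    have hline : HasDerivAt (fun r : ℝ => x + r • y) y r := by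
      simpa using ((hasDerivAt_id r).smul_const y).const_add x
    convert hline.norm_rpow (hseg r hr) γ using 1
    ring
  have hcont : ContinuousOn (fun r : ℝ => ⟪x + r • y, y⟫ * ‖x + r • y‖ ^ (γ - 2))
      (uIcc 0 1) := by
    rw [uIcc_of_le zero_le_one]
    exact ContinuousOn.mul (by fun_prop) (continuousOn_norm_add_smul_rpow x y _ hseg)
  rw [← intervalIntegral.integral_const_mul,
    intervalIntegral.integral_eq_sub_of_hasDerivAt hderiv (hcont.intervalIntegrable.const_mul γ)]
  simp

end NormRpow

theorem EuclideanSpace.norm_add_rpow_sub_norm_rpow_eq_sum {ι : Type*} [Fintype ι]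
    (x y : EuclideanSpace ℝ ι) (γ : ℝ) (hseg : ∀ r ∈ Icc (0 : ℝ) 1, x + r • y ≠ 0) :
    ‖x + y‖ ^ γ - ‖x‖ ^ γ
      = γ * ∑ i, y i * ∫ r in (0 : ℝ)..1, (x + r • y) i * ‖x + r • y‖ ^ (γ - 2) := by
  have hint : ∀ i, IntervalIntegrable (fun r : ℝ => y i * ((x + r • y) i * ‖x + r • y‖ ^ (γ - 2)))
      MeasureTheory.volume 0 1 := by
    intro i
    refine ContinuousOn.intervalIntegrable ?_
    rw [uIcc_of_le zero_le_one]
    exact ContinuousOn.mul (by fun_prop)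
      (ContinuousOn.mul (by fun_prop) (continuousOn_norm_add_smul_rpow x y _ hseg))
  rw [norm_add_rpow_sub_norm_rpow_eq_integral x y γ hseg]
  congr 1
  simp_rw [← intervalIntegral.integral_const_mul]
  rw [← intervalIntegral.integral_finsetSum fun i _ => hint i]
  refine intervalIntegral.integral_congr fun r _ => ?_
  simp only [PiLp.inner_apply, RCLike.inner_apply, conj_trivial, Finset.sum_mul]
  exact Finset.sum_congr rfl fun i _ => by ring

/-- `norv` is the Euclidean norm transported along this map; the norm of `ℝ × ℝ` is the sup norm. -/
def prodEquivEuclidean : (ℝ × ℝ) ≃ₗ[ℝ] EuclideanSpace ℝ (Fin 2) :=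
  (LinearEquiv.finTwoArrow ℝ ℝ).symm.trans (WithLp.linearEquiv 2 ℝ (Fin 2 → ℝ)).symm

theorem prodEquivEuclidean_apply (v : ℝ × ℝ) (i : Fin 2) :
    prodEquivEuclidean v i = comp2 v i := rfl

theorem norm_prodEquivEuclidean (v : ℝ × ℝ) : ‖prodEquivEuclidean v‖ = norv v := by
  rw [EuclideanSpace.norm_eq, norv, Fin.sum_univ_two]
  simp [prodEquivEuclidean]

theorem norv_nonneg (v : ℝ × ℝ) : 0 ≤ norv v := Real.sqrt_nonneg _

theorem norv_pos {v : ℝ × ℝ} (hv : v ≠ 0) : 0 < norv v := by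
  rw [← norm_prodEquivEuclidean]
  exact norm_pos_iff.mpr (prodEquivEuclidean.map_ne_zero_iff.mpr hv)

theorem comp2_sub (v w : ℝ × ℝ) (i : Fin 2) : comp2 (v - w) i = comp2 v i - comp2 w i := by
  simp only [← prodEquivEuclidean_apply, map_sub, PiLp.sub_apply]

theorem sm_eq_I_mul_integral (γ₂ : ℝ) (m : Fin 2) (lam η : ℝ × ℝ) :
    sm γ₂ m lam η = Complex.I * ((∫ r in (0 : ℝ)..1,
      comp2 ((1 - r) • η - r • lam) m * norv ((1 - r) • η - r • lam) ^ (γ₂ - 2) : ℝ) : ℂ) := by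
  rw [sm, ← intervalIntegral.integral_ofReal, ← intervalIntegral.integral_const_mul]
  refine intervalIntegral.integral_congr fun r _ => ?_
  rw [Real.rpow_eq_pow, show γ₂ - 2 = -(2 - γ₂) by ring, Real.rpow_neg (norv_nonneg _)]
  push_cast
  ring

theorem sum_I_mul_comp2_mul_sm (γ₂ : ℝ) (ξ η : ℝ × ℝ)
    (hseg : ∀ r ∈ Icc (0 : ℝ) 1, (1 - r) • η - r • (ξ - η) ≠ 0) :
    ∑ m : Fin 2, Complex.I * comp2 ξ m * γ₂ * sm γ₂ m (ξ - η) η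
      = (norv (ξ - η) ^ γ₂ : ℝ) - (norv η ^ γ₂ : ℝ) := by
  have hline : ∀ r : ℝ, prodEquivEuclidean ((1 - r) • η - r • (ξ - η))
      = prodEquivEuclidean η + r • -prodEquivEuclidean ξ := by
    intro r
    rw [← map_neg, ← map_smul, ← map_add]
    congr 1
    ext <;> simp <;> ring
  have hend : prodEquivEuclidean η + -prodEquivEuclidean ξ = -prodEquivEuclidean (ξ - η) := by
    rw [map_sub]; abel
  have hftc := EuclideanSpace.norm_add_rpow_sub_norm_rpow_eq_sum _ _ γ₂ fun r hr => by
    rw [← hline]; exact prodEquivEuclidean.map_ne_zero_iff.mpr (hseg r hr)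
  simp only [hend, ← hline, norm_neg, norm_prodEquivEuclidean, PiLp.neg_apply,
    prodEquivEuclidean_apply, neg_mul, Finset.sum_neg_distrib] at hftc
  rw [← Complex.ofReal_sub, hftc]
  push_cast
  rw [mul_neg, Finset.mul_sum, ← Finset.sum_neg_distrib]
  refine Finset.sum_congr rfl fun m _ => ?_
  rw [sm_eq_I_mul_integral]
  ring_nf
  rw [Complex.I_sq]
  ring

theorem stmt11_general (γ₂ : ℝ) (ξ η : ℝ × ℝ)
    (hη : η ≠ 0) (hξη : ξ - η ≠ 0)
    (hseg : ∀ r ∈ Set.Icc (0:ℝ) 1, (1 - r) • η - r • (ξ - η) ≠ 0) (l : Fin 2) :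
    Complex.I * (comp2 (ξ - η) l : ℂ) / (Real.rpow (norv (ξ - η)) γ₂ : ℂ)
      + Complex.I * (comp2 η l : ℂ) / (Real.rpow (norv η) γ₂ : ℂ)
    = Complex.I * (comp2 ξ l : ℂ) / (Real.rpow (norv (ξ - η)) γ₂ : ℂ)
      + ∑ m : Fin 2, Complex.I * (comp2 ξ m : ℂ)
          * (Complex.I * (comp2 η l : ℂ) / (Real.rpow (norv η) γ₂ : ℂ))
          * (1 / (Real.rpow (norv (ξ - η)) γ₂ : ℂ)) * (γ₂ : ℂ) * sm γ₂ m (ξ - η) η := by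
  simp only [Real.rpow_eq_pow]
  set A : ℂ := ((norv (ξ - η) ^ γ₂ : ℝ) : ℂ)
  set B : ℂ := ((norv η ^ γ₂ : ℝ) : ℂ)
  have hA : A ≠ 0 := Complex.ofReal_ne_zero.mpr (Real.rpow_pos_of_pos (norv_pos hξη) γ₂).ne'
  have hB : B ≠ 0 := Complex.ofReal_ne_zero.mpr (Real.rpow_pos_of_pos (norv_pos hη) γ₂).ne'
  have hfactor : ∑ m : Fin 2, Complex.I * comp2 ξ m * (Complex.I * comp2 η l / B) * (1 / A)
        * γ₂ * sm γ₂ m (ξ - η) η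
      = Complex.I * comp2 η l / B * (1 / A) * (A - B) := by
    rw [← sum_I_mul_comp2_mul_sm γ₂ ξ η hseg, Finset.mul_sum]
    exact Finset.sum_congr rfl fun m _ => by ring
  rw [hfactor, comp2_sub]
  push_cast
  field_simp
  ring

/-- For `ξ, η ∈ ℝ²` with `ξ, η, ξ−η` nonzero, `γ₂ ∈ (0,2)` and the segment
`(1−r)η − r(ξ−η)` avoiding the origin:
`i(ξ−η)_l/|ξ−η|^{γ₂} + iη_l/|η|^{γ₂}`
`= iξ_l/|ξ−η|^{γ₂} + Σ_m iξ_m (iη_l/|η|^{γ₂}) (1/|ξ−η|^{γ₂}) γ₂ s^m(ξ−η, η)`. -/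
theorem stmt11 (γ₂ : ℝ) (h0 : 0 < γ₂) (h2 : γ₂ < 2) (ξ η : ℝ × ℝ)
    (hξ : ξ ≠ 0) (hη : η ≠ 0) (hξη : ξ - η ≠ 0)
    (hseg : ∀ r ∈ Set.Icc (0:ℝ) 1, (1 - r) • η - r • (ξ - η) ≠ 0) (l : Fin 2) :
    Complex.I * (comp2 (ξ - η) l : ℂ) / (Real.rpow (norv (ξ - η)) γ₂ : ℂ)
      + Complex.I * (comp2 η l : ℂ) / (Real.rpow (norv η) γ₂ : ℂ)
    = Complex.I * (comp2 ξ l : ℂ) / (Real.rpow (norv (ξ - η)) γ₂ : ℂ)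
      + ∑ m : Fin 2, Complex.I * (comp2 ξ m : ℂ)
          * (Complex.I * (comp2 η l : ℂ) / (Real.rpow (norv η) γ₂ : ℂ))
          * (1 / (Real.rpow (norv (ξ - η)) γ₂ : ℂ)) * (γ₂ : ℂ) * sm γ₂ m (ξ - η) η :=
  stmt11_general γ₂ ξ η hη hξη hseg l
end
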